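/- Let T, E be positive trace-preserving linear maps on M_d(ℂ) where T has a unique stationary state and ‖Tⁿ − T^∞‖_{1→1} ≤ K·μⁿ for all n with K ≥ 1, 0 ≤ μ < 1. Set n̂ = ⌈log(1/K)/log(μ)⌉. Then for density matrices ρ₀, σ₀ and all n > n̂: ‖Tⁿ(ρ₀) − Eⁿ(σ₀)‖₁ ≤ K·μⁿ‖ρ₀ − σ₀‖₁ + (n̂ + K·(μ^{n̂} − μⁿ)/(1−μ))·‖E − T‖_{1→1}. -/

import Mathlib

open Matrix Filter
open scoped ComplexOrder

/-- Trace norm (Schatten 1-norm) of a complex matrix: `tr √(XᴴX)`. -/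
noncomputable def traceNorm {d : ℕ} (X : Matrix (Fin d) (Fin d) ℂ) : ℝ :=
  ((Matrix.posSemidef_conjTranspose_mul_self X).isHermitian.eigenvectorUnitary.1 *
    diagonal (((↑) : ℝ → ℂ) ∘ (√·) ∘ (Matrix.posSemidef_conjTranspose_mul_self X).isHermitian.eigenvalues) *
    (star (Matrix.posSemidef_conjTranspose_mul_self X).isHermitian.eigenvectorUnitary :
      Matrix (Fin d) (Fin d) ℂ)).trace.re

/-- Linear endomorphisms of `M_d(ℂ)` (superoperators). -/
abbrev MatEnd (d : ℕ) := Module.End ℂ (Matrix (Fin d) (Fin d) ℂ)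

/-- Trace-preserving map. -/
def IsTP {d : ℕ} (T : MatEnd d) : Prop := ∀ X, (T X).trace = X.trace

/-- Positive map: maps PSD matrices to PSD matrices. -/
def IsPos {d : ℕ} (T : MatEnd d) : Prop := ∀ X, X.PosSemidef → (T X).PosSemidef

/-- Hermiticity-preserving map. -/
def IsHP {d : ℕ} (T : MatEnd d) : Prop := ∀ X, (T X)ᴴ = T Xᴴ

/-- Induced 1→1 norm: `sup_{X ≠ 0} ‖T X‖₁ / ‖X‖₁`. -/
noncomputable def norm1to1 {d : ℕ} (T : MatEnd d) : ℝ :=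
  sSup {r | ∃ X, X ≠ 0 ∧ r = traceNorm (T X) / traceNorm X}

/-- Trace-norm contraction coefficient: sup over nonzero Hermitian traceless `σ`. -/
noncomputable def tau {d : ℕ} (T : MatEnd d) : ℝ :=
  sSup {r | ∃ σ : Matrix (Fin d) (Fin d) ℂ,
    σ.IsHermitian ∧ σ.trace = 0 ∧ σ ≠ 0 ∧ r = traceNorm (T σ) / traceNorm σ}

/-- Density matrix: positive semidefinite with unit trace. -/
def IsDensity {d : ℕ} (ρ : Matrix (Fin d) (Fin d) ℂ) : Prop := ρ.PosSemidef ∧ ρ.trace = 1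

/-- `Tinf` is the Cesàro-mean fixed point projection of `T`. -/
def IsCesaroProj {d : ℕ} (T Tinf : MatEnd d) : Prop :=
  ∀ X, Tendsto (fun n : ℕ => (n : ℂ)⁻¹ • ∑ k ∈ Finset.range n, (T ^ (k + 1)) X)
    atTop (nhds (Tinf X))

/-!
Write `Tⁿρ₀ - Eⁿσ₀ = Tⁿ(ρ₀ - σ₀) + ∑_{k<n} Tᵏ (T - E) E^{n-1-k} σ₀`. Each `(T - E) Eʲσ₀` is a
traceless Hermitian matrix of trace norm at most `‖E - T‖_{1→1}`, and on traceless matrices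
`Tᵏ` agrees with `Tᵏ - T^∞`. So the head term is at most `Kμⁿ‖ρ₀ - σ₀‖₁`, and the `k`-th
summand is at most `‖E - T‖_{1→1}` for `k < n̂` (positive trace-preserving maps contract the
trace norm of Hermitian matrices) and at most `Kμᵏ‖E - T‖_{1→1}` for `k ≥ n̂`; summing the
geometric tail gives the bound. Nothing depends on the value of `n̂`: any cutoff `N ≤ n` works.
-/

open scoped MatrixOrder

lemma Matrix.IsHermitian.trace_cfc {n 𝕜 : Type*} [Fintype n] [DecidableEq n] [RCLike 𝕜]
    {A : Matrix n n 𝕜} (hA : A.IsHermitian) (f : ℝ → ℝ) :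
    (cfc f A).trace = ∑ i, (f (hA.eigenvalues i) : 𝕜) := by
  rw [hA.cfc_eq, IsHermitian.cfc, Unitary.conjStarAlgAut_apply, trace_mul_cycle,
    Unitary.coe_star_mul_self, one_mul, trace_diagonal]
  rfl

variable {d : ℕ}

lemma traceNorm_eq_re_trace_abs (X : Matrix (Fin d) (Fin d) ℂ) :
    traceNorm X = (CFC.abs X).trace.re := by
  have hX := posSemidef_conjTranspose_mul_self X
  rw [CFC.abs, star_eq_conjTranspose X, CFC.sqrt_eq_cfc, cfc_nnreal_eq_real _ (Xᴴ * X),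
    hX.1.cfc_eq, IsHermitian.cfc, Unitary.conjStarAlgAut_apply, traceNorm]
  congr 5
  funext i
  simp [max_eq_left (hX.eigenvalues_nonneg i)]

lemma traceNorm_nonneg (X : Matrix (Fin d) (Fin d) ℂ) : 0 ≤ traceNorm X := by
  rw [traceNorm_eq_re_trace_abs]
  exact Complex.nonneg_iff.mp (CFC.abs_nonneg X).posSemidef.trace_nonneg |>.1

@[simp]
lemma traceNorm_neg (X : Matrix (Fin d) (Fin d) ℂ) : traceNorm (-X) = traceNorm X := by
  simp only [traceNorm_eq_re_trace_abs, CFC.abs_neg]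

lemma traceNorm_of_posSemidef {P : Matrix (Fin d) (Fin d) ℂ} (hP : P.PosSemidef) :
    traceNorm P = P.trace.re := by
  rw [traceNorm_eq_re_trace_abs, CFC.abs_of_nonneg P hP.nonneg]

lemma traceNorm_of_isHermitian {A : Matrix (Fin d) (Fin d) ℂ} (hA : A.IsHermitian) :
    traceNorm A = ∑ i, |hA.eigenvalues i| := by
  rw [traceNorm_eq_re_trace_abs, CFC.abs_eq_cfc_norm A hA.isSelfAdjoint, hA.trace_cfc]
  simp

lemma traceNorm_eq_posPart_add_negPart {A : Matrix (Fin d) (Fin d) ℂ} (hA : A.IsHermitian) :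
    traceNorm A = (A⁺).trace.re + (A⁻).trace.re := by
  rw [traceNorm_eq_re_trace_abs, ← CFC.posPart_add_negPart A hA.isSelfAdjoint, trace_add,
    Complex.add_re]

-- In an eigenbasis of `P - N`, each eigenvalue is the difference of two nonnegative diagonal
-- entries, of `P` and of `N`.
lemma traceNorm_sub_le_of_posSemidef {P N : Matrix (Fin d) (Fin d) ℂ} (hP : P.PosSemidef)
    (hN : N.PosSemidef) : traceNorm (P - N) ≤ P.trace.re + N.trace.re := by
  have hA : (P - N).IsHermitian := hP.1.sub hN.1
  set V := star hA.eigenvectorUnitary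
  have hdiag := hA.conjStarAlgAut_star_eigenvectorUnitary
  have hconj : ∀ Q : Matrix (Fin d) (Fin d) ℂ, Q.PosSemidef →
      (Unitary.conjStarAlgAut ℂ _ V Q).PosSemidef := fun Q hQ =>
    (star_right_conjugate_nonneg hQ.nonneg _).posSemidef
  have htrace : ∀ Q : Matrix (Fin d) (Fin d) ℂ,
      (Unitary.conjStarAlgAut ℂ _ V Q).trace = Q.trace := fun Q => by
    rw [Unitary.conjStarAlgAut_apply, trace_mul_cycle, Unitary.coe_star_mul_self, one_mul]
  have heig : ∀ i, hA.eigenvalues i =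
      (Unitary.conjStarAlgAut ℂ _ V P i i).re - (Unitary.conjStarAlgAut ℂ _ V N i i).re := by
    intro i
    have := congrArg (fun M => (M i i).re) hdiag
    simp only [map_sub, Matrix.sub_apply, Complex.sub_re, diagonal_apply_eq,
      Function.comp_apply] at this
    exact this.symm
  rw [traceNorm_of_isHermitian hA, ← htrace P, ← htrace N, trace, trace, Complex.re_sum,
    Complex.re_sum, ← Finset.sum_add_distrib]
  gcongr with i
  rw [heig, abs_sub_le_iff]
  have hp := (Complex.nonneg_iff.mp ((hconj P hP).diag_nonneg (i := i))).1
  have hn := (Complex.nonneg_iff.mp ((hconj N hN).diag_nonneg (i := i))).1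
  constructor <;> simp only [diag_apply] <;> linarith

lemma traceNorm_add_le_of_isHermitian {A B : Matrix (Fin d) (Fin d) ℂ} (hA : A.IsHermitian)
    (hB : B.IsHermitian) : traceNorm (A + B) ≤ traceNorm A + traceNorm B := by
  have hsplit : A + B = (A⁺ + B⁺) - (A⁻ + B⁻) := by
    conv_lhs => rw [← CFC.posPart_sub_negPart A hA.isSelfAdjoint,
      ← CFC.posPart_sub_negPart B hB.isSelfAdjoint]
    abel
  have hpos : ∀ C : Matrix (Fin d) (Fin d) ℂ, (C⁺).PosSemidef ∧ (C⁻).PosSemidef := fun C =>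
    ⟨(CFC.posPart_nonneg C).posSemidef, (CFC.negPart_nonneg C).posSemidef⟩
  rw [hsplit, traceNorm_eq_posPart_add_negPart hA, traceNorm_eq_posPart_add_negPart hB]
  refine (traceNorm_sub_le_of_posSemidef ((hpos A).1.add (hpos B).1)
    ((hpos A).2.add (hpos B).2)).trans_eq ?_
  simp only [trace_add, Complex.add_re]
  ring

lemma traceNorm_sum_le_of_isHermitian {ι : Type*} {s : Finset ι}
    {f : ι → Matrix (Fin d) (Fin d) ℂ} (hf : ∀ i ∈ s, (f i).IsHermitian) :
    traceNorm (∑ i ∈ s, f i) ≤ ∑ i ∈ s, traceNorm (f i) := by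
  induction s using Finset.cons_induction with
  | empty => simp [traceNorm_of_posSemidef PosSemidef.zero]
  | cons a s _ ih =>
    rw [Finset.forall_mem_cons] at hf
    rw [Finset.sum_cons, Finset.sum_cons]
    exact (traceNorm_add_le_of_isHermitian hf.1 (isSelfAdjoint_sum s hf.2)).trans
      (add_le_add le_rfl (ih hf.2))

lemma IsPos.isHermitian_apply {T : MatEnd d} (hT : IsPos T) {A : Matrix (Fin d) (Fin d) ℂ}
    (hA : A.IsHermitian) : (T A).IsHermitian := by
  rw [← CFC.posPart_sub_negPart A hA.isSelfAdjoint, map_sub]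
  exact (hT _ (CFC.posPart_nonneg A).posSemidef).1.sub
    (hT _ (CFC.negPart_nonneg A).posSemidef).1

lemma IsPos.traceNorm_apply_le {T : MatEnd d} (hT : IsPos T) (hTP : IsTP T)
    {A : Matrix (Fin d) (Fin d) ℂ} (hA : A.IsHermitian) : traceNorm (T A) ≤ traceNorm A := by
  rw [traceNorm_eq_posPart_add_negPart hA, ← hTP A⁺, ← hTP A⁻]
  conv_lhs => rw [← CFC.posPart_sub_negPart A hA.isSelfAdjoint, map_sub]
  exact traceNorm_sub_le_of_posSemidef (hT _ (CFC.posPart_nonneg A).posSemidef)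
    (hT _ (CFC.negPart_nonneg A).posSemidef)

lemma IsPos.pow {T : MatEnd d} (hT : IsPos T) (n : ℕ) : IsPos (T ^ n) := by
  induction n with
  | zero => exact fun X hX => hX
  | succ n ih =>
    intro X hX
    rw [pow_succ', Module.End.mul_apply]
    exact hT _ (ih X hX)

lemma IsTP.pow {T : MatEnd d} (hT : IsTP T) (n : ℕ) : IsTP (T ^ n) := by
  induction n with
  | zero => exact fun X => rfl
  | succ n ih =>
    intro X
    rw [pow_succ', Module.End.mul_apply, hT, ih]

lemma IsDensity.map {T : MatEnd d} (hT : IsPos T) (hTP : IsTP T) {ρ : Matrix (Fin d) (Fin d) ℂ}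
    (hρ : IsDensity ρ) : IsDensity (T ρ) :=
  ⟨hT ρ hρ.1, (hTP ρ).trans hρ.2⟩

lemma IsDensity.traceNorm_eq_one {ρ : Matrix (Fin d) (Fin d) ℂ} (hρ : IsDensity ρ) :
    traceNorm ρ = 1 := by
  rw [traceNorm_of_posSemidef hρ.1, hρ.2, Complex.one_re]

section Frobenius

attribute [local instance] Matrix.frobeniusNormedAddCommGroup Matrix.frobeniusNormedSpace

lemma Matrix.frobenius_norm_sq_eq_re_trace {m n : Type*} [Fintype m] [Fintype n]
    (X : Matrix m n ℂ) : ‖X‖ ^ 2 = (Xᴴ * X).trace.re := by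
  rw [frobenius_norm_def, ← Real.sqrt_eq_rpow, Real.sq_sqrt (by positivity), Finset.sum_comm]
  simp [trace, mul_apply, Complex.re_sum, Complex.mul_re, ← sq, Complex.sq_norm,
    Complex.normSq_apply]

lemma exists_singularValues (X : Matrix (Fin d) (Fin d) ℂ) :
    ∃ s : Fin d → ℝ, (∀ i, 0 ≤ s i) ∧ traceNorm X = ∑ i, s i ∧ ‖X‖ ^ 2 = ∑ i, s i ^ 2 := by
  have hAbs := (CFC.abs_nonneg X).posSemidef
  refine ⟨hAbs.1.eigenvalues, hAbs.eigenvalues_nonneg, ?_, ?_⟩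
  · rw [traceNorm_eq_re_trace_abs, hAbs.1.trace_eq_sum_eigenvalues]
    simp
  · rw [frobenius_norm_sq_eq_re_trace, ← star_eq_conjTranspose, ← CFC.abs_mul_abs, ← sq,
      ← cfc_pow_id (R := ℝ) (CFC.abs X) 2 hAbs.1.isSelfAdjoint, hAbs.1.trace_cfc]
    simp [-Complex.ofReal_pow]

lemma frobenius_norm_le_traceNorm (X : Matrix (Fin d) (Fin d) ℂ) : ‖X‖ ≤ traceNorm X := by
  obtain ⟨s, hs, htn, hfrob⟩ := exists_singularValues X
  refine (pow_le_pow_iff_left₀ (norm_nonneg X) (traceNorm_nonneg X) two_ne_zero).mp ?_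
  rw [hfrob, htn]
  exact Finset.sum_sq_le_sq_sum_of_nonneg fun i _ => hs i

lemma traceNorm_le_sqrt_mul_frobenius_norm (X : Matrix (Fin d) (Fin d) ℂ) :
    traceNorm X ≤ √d * ‖X‖ := by
  obtain ⟨s, -, htn, hfrob⟩ := exists_singularValues X
  refine (pow_le_pow_iff_left₀ (traceNorm_nonneg X) (by positivity) two_ne_zero).mp ?_
  rw [mul_pow, Real.sq_sqrt d.cast_nonneg, hfrob, htn]
  simpa using sq_sum_le_card_mul_sum_sq (s := Finset.univ) (f := s)

lemma traceNorm_pos {X : Matrix (Fin d) (Fin d) ℂ} (hX : X ≠ 0) : 0 < traceNorm X :=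
  (norm_pos_iff.mpr hX).trans_le (frobenius_norm_le_traceNorm X)

-- `norm1to1` is an `sSup` in `ℝ`, a junk value unless this set is bounded; it is, because the
-- trace norm is comparable to the Frobenius norm, for which every linear map is bounded.
lemma bddAbove_traceNorm_ratio (L : MatEnd d) :
    BddAbove {r | ∃ X, X ≠ 0 ∧ r = traceNorm (L X) / traceNorm X} := by
  set L' := LinearMap.toContinuousLinearMap L
  refine ⟨√d * L'.opNorm, ?_⟩
  rintro r ⟨X, hX, rfl⟩
  rw [div_le_iff₀ (traceNorm_pos hX), mul_assoc]
  calc traceNorm (L X) ≤ √d * ‖L' X‖ := traceNorm_le_sqrt_mul_frobenius_norm (L X)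
    _ ≤ √d * (L'.opNorm * traceNorm X) := by
        gcongr
        exact (L'.le_opNorm X).trans
          (mul_le_mul_of_nonneg_left (frobenius_norm_le_traceNorm X) L'.opNorm_nonneg)

end Frobenius

lemma traceNorm_apply_le_norm1to1_mul (L : MatEnd d) (X : Matrix (Fin d) (Fin d) ℂ) :
    traceNorm (L X) ≤ norm1to1 L * traceNorm X := by
  rcases eq_or_ne X 0 with rfl | hX
  · simp [traceNorm_of_posSemidef PosSemidef.zero]
  · rw [← div_le_iff₀ (traceNorm_pos hX)]
    exact le_csSup (bddAbove_traceNorm_ratio L) ⟨X, hX, rfl⟩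

lemma norm1to1_nonneg (L : MatEnd d) : 0 ≤ norm1to1 L :=
  Real.sSup_nonneg fun _ ⟨_, _, hr⟩ =>
    hr ▸ div_nonneg (traceNorm_nonneg _) (traceNorm_nonneg _)

lemma traceNorm_apply_le_of_trace_eq_zero {L Tinf : MatEnd d} {ρ : Matrix (Fin d) (Fin d) ℂ}
    (hTinf : ∀ X, Tinf X = X.trace • ρ) {Z : Matrix (Fin d) (Fin d) ℂ} (hZ : Z.trace = 0) :
    traceNorm (L Z) ≤ norm1to1 (L - Tinf) * traceNorm Z := by
  have h : L Z = (L - Tinf) Z := by rw [LinearMap.sub_apply, hTinf, hZ, zero_smul, sub_zero]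
  rw [h]
  exact traceNorm_apply_le_norm1to1_mul _ Z

lemma pow_sub_pow_eq_sum {R : Type*} [Ring R] (a b : R) (n : ℕ) :
    a ^ n - b ^ n = ∑ k ∈ Finset.range n, a ^ k * (a - b) * b ^ (n - 1 - k) := by
  have h := Finset.sum_range_sub (fun k => a ^ k * b ^ (n - k)) n
  simp only [Nat.sub_self, pow_zero, mul_one, one_mul, Nat.sub_zero] at h
  rw [← h]
  refine Finset.sum_congr rfl fun k hk => ?_
  obtain ⟨m, rfl⟩ : ∃ m, n = k + 1 + m := ⟨n - (k + 1), by grind⟩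
  rw [show k + 1 + m - k = m + 1 by omega, show k + 1 + m - (k + 1) = m by omega,
    show k + 1 + m - 1 - k = m by omega, pow_succ a, pow_succ' b]
  noncomm_ring

lemma sum_range_ite_one_geom {K μ : ℝ} (hμ : μ ≠ 1) {N n : ℕ} (hNn : N ≤ n) :
    ∑ k ∈ Finset.range n, (if k < N then 1 else K * μ ^ k) =
      N + K * (μ ^ N - μ ^ n) / (1 - μ) := by
  rw [Finset.range_eq_Ico, ← Finset.sum_Ico_consecutive _ N.zero_le hNn,
    Finset.sum_congr rfl fun k hk => if_pos (Finset.mem_Ico.mp hk).2,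
    Finset.sum_congr rfl fun k hk => if_neg (Finset.mem_Ico.mp hk).1.not_gt,
    ← Finset.mul_sum, geom_sum_Ico hμ hNn, ← neg_div_neg_eq, neg_sub, neg_sub, mul_div_assoc]
  simp

lemma pow_apply_sub_pow_apply_eq {R M : Type*} [Semiring R] [AddCommGroup M] [Module R M]
    (T E : Module.End R M) (x y : M) (n : ℕ) :
    (T ^ n) x - (E ^ n) y =
      (T ^ n) (x - y) + ∑ k ∈ Finset.range n, (T ^ k) ((T - E) ((E ^ (n - 1 - k)) y)) := by
  have h := congrArg (· y) (pow_sub_pow_eq_sum T E n)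
  rw [LinearMap.sub_apply] at h
  simp only [LinearMap.sum_apply, Module.End.mul_apply] at h
  rw [map_sub, ← h]
  abel

section Perturbation

variable {T E Tinf : MatEnd d} {ρ : Matrix (Fin d) (Fin d) ℂ} {K μ : ℝ}

lemma traceNorm_sub_apply_le_norm1to1 {Y : Matrix (Fin d) (Fin d) ℂ} (hY : IsDensity Y) :
    traceNorm ((T - E) Y) ≤ norm1to1 (E - T) := by
  rw [← neg_sub E T, LinearMap.neg_apply, traceNorm_neg, ← mul_one (norm1to1 _),
    ← hY.traceNorm_eq_one]
  exact traceNorm_apply_le_norm1to1_mul _ _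

lemma traceNorm_pow_apply_le_ite (hT : IsPos T) (hTP : IsTP T)
    (hTinf : ∀ X, Tinf X = X.trace • ρ) (hconv : ∀ n : ℕ, norm1to1 (T ^ n - Tinf) ≤ K * μ ^ n)
    (N k : ℕ) {Z : Matrix (Fin d) (Fin d) ℂ} (hZ : Z.IsHermitian) (hZtr : Z.trace = 0) {δ : ℝ}
    (hZδ : traceNorm Z ≤ δ) :
    traceNorm ((T ^ k) Z) ≤ (if k < N then 1 else K * μ ^ k) * δ := by
  split_ifs
  · rw [one_mul]
    exact ((hT.pow k).traceNorm_apply_le (hTP.pow k) hZ).trans hZδ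
  · calc traceNorm ((T ^ k) Z) ≤ norm1to1 (T ^ k - Tinf) * traceNorm Z :=
          traceNorm_apply_le_of_trace_eq_zero hTinf hZtr
      _ ≤ norm1to1 (T ^ k - Tinf) * δ := mul_le_mul_of_nonneg_left hZδ (norm1to1_nonneg _)
      _ ≤ K * μ ^ k * δ :=
          mul_le_mul_of_nonneg_right (hconv k) ((traceNorm_nonneg Z).trans hZδ)

theorem traceNorm_pow_apply_sub_pow_apply_le (hT : IsPos T) (hTP : IsTP T) (hE : IsPos E)
    (hETP : IsTP E) (hTinf : ∀ X, Tinf X = X.trace • ρ)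
    (hconv : ∀ n : ℕ, norm1to1 (T ^ n - Tinf) ≤ K * μ ^ n) (hμ : μ < 1)
    {ρ₀ σ₀ : Matrix (Fin d) (Fin d) ℂ} (hρ₀ : IsDensity ρ₀) (hσ₀ : IsDensity σ₀) {N n : ℕ}
    (hNn : N ≤ n) :
    traceNorm ((T ^ n) ρ₀ - (E ^ n) σ₀) ≤
      K * μ ^ n * traceNorm (ρ₀ - σ₀) +
        (N + K * (μ ^ N - μ ^ n) / (1 - μ)) * norm1to1 (E - T) := by
  set Z : ℕ → Matrix (Fin d) (Fin d) ℂ := fun j => (T - E) ((E ^ j) σ₀)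
  have hσ (j : ℕ) : IsDensity ((E ^ j) σ₀) := hσ₀.map (hE.pow j) (hETP.pow j)
  have hZ (j : ℕ) : (Z j).IsHermitian := (hT _ (hσ j).1).1.sub (hE _ (hσ j).1).1
  have hZtr (j : ℕ) : (Z j).trace = 0 := by
    change ((T - E) ((E ^ j) σ₀)).trace = 0
    rw [LinearMap.sub_apply, trace_sub, hTP, hETP, sub_self]
  have hdiff : (ρ₀ - σ₀).trace = 0 := by rw [trace_sub, hρ₀.2, hσ₀.2, sub_self]
  have hterm (k : ℕ) : ((T ^ k) (Z (n - 1 - k))).IsHermitian :=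
    (hT.pow k).isHermitian_apply (hZ _)
  calc traceNorm ((T ^ n) ρ₀ - (E ^ n) σ₀)
      ≤ traceNorm ((T ^ n) (ρ₀ - σ₀)) +
          ∑ k ∈ Finset.range n, traceNorm ((T ^ k) (Z (n - 1 - k))) := by
        rw [pow_apply_sub_pow_apply_eq T E ρ₀ σ₀ n]
        exact (traceNorm_add_le_of_isHermitian
          ((hT.pow n).isHermitian_apply (hρ₀.1.1.sub hσ₀.1.1))
          (isSelfAdjoint_sum _ fun k _ => hterm k)).trans
          (add_le_add le_rfl (traceNorm_sum_le_of_isHermitian fun k _ => hterm k))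
    _ ≤ K * μ ^ n * traceNorm (ρ₀ - σ₀) +
        ∑ k ∈ Finset.range n, (if k < N then 1 else K * μ ^ k) * norm1to1 (E - T) := by
        gcongr with k
        · exact (traceNorm_apply_le_of_trace_eq_zero hTinf hdiff).trans
            (mul_le_mul_of_nonneg_right (hconv n) (traceNorm_nonneg _))
        · exact traceNorm_pow_apply_le_ite hT hTP hTinf hconv N k (hZ _) (hZtr _)
            (traceNorm_sub_apply_le_norm1to1 (hσ _))
    _ = K * μ ^ n * traceNorm (ρ₀ - σ₀) +
          (N + K * (μ ^ N - μ ^ n) / (1 - μ)) * norm1to1 (E - T) := by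
        rw [← Finset.sum_mul, sum_range_ite_one_geom hμ.ne hNn]

end Perturbation

theorem discrete_time_perturbation_general {d : ℕ} (T E Tinf : MatEnd d)
    (hTTP : IsTP T) (hTPos : IsPos T) (hETP : IsTP E) (hEPos : IsPos E)
    (ρ : Matrix (Fin d) (Fin d) ℂ)
    (hTinf : ∀ X, Tinf X = X.trace • ρ)
    (K μ : ℝ) (hμ1 : μ < 1)
    (hconv : ∀ n : ℕ, norm1to1 (T ^ n - Tinf) ≤ K * μ ^ n)
    (ρ₀ σ₀ : Matrix (Fin d) (Fin d) ℂ) (hρ₀ : IsDensity ρ₀) (hσ₀ : IsDensity σ₀) :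
    ∀ n : ℕ, ⌈Real.log (1 / K) / Real.log μ⌉₊ < n →
      traceNorm ((T ^ n) ρ₀ - (E ^ n) σ₀) ≤
        K * μ ^ n * traceNorm (ρ₀ - σ₀) +
          ((⌈Real.log (1 / K) / Real.log μ⌉₊ : ℝ) +
            K * (μ ^ (⌈Real.log (1 / K) / Real.log μ⌉₊ : ℕ) - μ ^ n) / (1 - μ)) *
            norm1to1 (E - T) := fun _ hn =>
  traceNorm_pow_apply_sub_pow_apply_le hTPos hTTP hEPos hETP hTinf hconv hμ1 hρ₀ hσ₀ hn.le

/-- discrete-time perturbation bound for `n > n̂`. -/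
theorem discrete_time_perturbation {d : ℕ} (T E Tinf : MatEnd d)
    (hTTP : IsTP T) (hTPos : IsPos T) (hETP : IsTP E) (hEPos : IsPos E)
    (ρ : Matrix (Fin d) (Fin d) ℂ) (hρ : IsDensity ρ) (hfix : T ρ = ρ)
    (huniq : ∀ ρ' : Matrix (Fin d) (Fin d) ℂ, IsDensity ρ' → T ρ' = ρ' → ρ' = ρ)
    (hTinf : ∀ X, Tinf X = X.trace • ρ)
    (K μ : ℝ) (hK : 1 ≤ K) (hμ0 : 0 ≤ μ) (hμ1 : μ < 1)
    (hconv : ∀ n : ℕ, norm1to1 (T ^ n - Tinf) ≤ K * μ ^ n)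
    (ρ₀ σ₀ : Matrix (Fin d) (Fin d) ℂ) (hρ₀ : IsDensity ρ₀) (hσ₀ : IsDensity σ₀) :
    ∀ n : ℕ, ⌈Real.log (1 / K) / Real.log μ⌉₊ < n →
      traceNorm ((T ^ n) ρ₀ - (E ^ n) σ₀) ≤
        K * μ ^ n * traceNorm (ρ₀ - σ₀) +
          ((⌈Real.log (1 / K) / Real.log μ⌉₊ : ℝ) +
            K * (μ ^ (⌈Real.log (1 / K) / Real.log μ⌉₊ : ℕ) - μ ^ n) / (1 - μ)) *
            norm1to1 (E - T) :=
  discrete_time_perturbation_general T E Tinf hTTP hTPos hETP hEPos ρ hTinf K μ hμ1 hconv ρ₀ σ₀ hρ₀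
    hσ₀
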